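/- Under the regularity condition, for every integer j ≥ 0 the covariance c_j = Cov(X_0, X_j) satisfies c_j = lim_{n→∞} Σ_{l=0}^{n−j} E[(P_0 X_l)(P_0 X_{l+j})]. -/

import Mathlib

/-!
Orthogonality of martingale increments gives
`E[(P₀X_l)(P₀X_{l+j})] = E[E(X_l|F_0) X_{l+j}] - E[E(X_l|F_{-1}) X_{l+j}]`, and stationarity
shifts this to `c(l) - c(l+1)` with `c(n) = E[E(X_0|F_{-n}) X_j]`. The sums telescope to
`E[X_0 X_j] - c(n+1)`, and `c(n) → E[E(X_0|F_{-∞}) X_j] = 0`: the maps `E(·|F_{-n})` are the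
orthogonal projections of `L²` onto a decreasing sequence of closed subspaces, so they converge
strongly to the projection onto the intersection, which is the `L²` space of `F_{-∞}`.
-/

open MeasureTheory Filter
open scoped Topology ENNReal

theorem Submodule.starProjection_tendsto_iInf {𝕜 E ι : Type*} [RCLike 𝕜] [NormedAddCommGroup E]
    [InnerProductSpace 𝕜 E] [CompleteSpace E] [Preorder ι]
    (K : ι → Submodule 𝕜 E) [∀ i, (K i).HasOrthogonalProjection]
    [(⨅ i, K i).HasOrthogonalProjection] (hK : Antitone K) (x : E) :
    Tendsto (fun i => (K i).starProjection x) atTop (𝓝 ((⨅ i, K i).starProjection x)) := by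
  have hclosure : (⨆ i, (K i)ᗮ).topologicalClosure = (⨅ i, K i)ᗮ := by
    rw [← Submodule.orthogonal_orthogonal_eq_closure, ← Submodule.iInf_orthogonal]
    simp only [Submodule.orthogonal_orthogonal]
  have h := Submodule.starProjection_tendsto_closure_iSup (fun i => (K i)ᗮ)
    (fun i j hij => Submodule.orthogonal_le (hK hij)) x
  simp only [hclosure, Submodule.starProjection_orthogonal_val] at h
  simpa using (tendsto_const_nhds (x := x)).sub h

theorem iInf_neg_natCast_eq_iInf {α : Type*} [CompleteLattice α] {F : ℤ → α} (hF : Monotone F) :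
    ⨅ n : ℕ, F (-n) = ⨅ j, F j :=
  le_antisymm (le_iInf fun j => iInf_le_of_le (-j).toNat (hF (by omega)))
    (le_iInf fun n => iInf_le F _)

namespace MeasureTheory

variable {Ω : Type*} {m m0 : MeasurableSpace Ω} {μ : Measure Ω}

theorem aestronglyMeasurable_iInf_of_antitone {G : ℕ → MeasurableSpace Ω} (hG : Antitone G)
    {f : Ω → ℝ} (hf : ∀ n, AEStronglyMeasurable[G n] f μ) :
    AEStronglyMeasurable[⨅ n, G n] f μ := by
  let g : ℕ → Ω → ℝ := fun n => (hf n).mk f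
  -- `limsup g` is a version of `f`, measurable for every `G n` since it only sees a tail of `g`.
  have hg_meas : ∀ n, Measurable[G n] (fun ω => limsup (fun k => g k ω) atTop) := by
    intro n
    have hshift : (fun ω => limsup (fun k => g k ω) atTop)
        = fun ω => limsup (fun k => g (k + n) ω) atTop :=
      funext fun ω => (limsup_nat_add (fun k => g k ω) n).symm
    rw [hshift]
    exact Measurable.limsup fun k =>
      (hf (k + n)).stronglyMeasurable_mk.measurable.mono (hG (Nat.le_add_left n k)) le_rfl
  refine ⟨fun ω => limsup (fun k => g k ω) atTop,
    (measurable_iff_comap_le.mpr (le_iInf fun n => measurable_iff_comap_le.mp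
      (hg_meas n))).stronglyMeasurable, ?_⟩
  filter_upwards [ae_all_iff.mpr fun n => (hf n).ae_eq_mk] with ω hω
  show f ω = limsup (fun k => g k ω) atTop
  rw [show (fun k => g k ω) = fun _ => f ω from funext fun k => (hω k).symm, limsup_const]

theorem lpMeas_iInf_of_antitone {G : ℕ → MeasurableSpace Ω} (hG : Antitone G) :
    lpMeas ℝ ℝ (⨅ n, G n) 2 μ = ⨅ n, lpMeas ℝ ℝ (G n) 2 μ := by
  ext f
  simp only [Submodule.mem_iInf, mem_lpMeas_iff_aestronglyMeasurable]
  exact ⟨fun h n => h.mono (iInf_le G n), aestronglyMeasurable_iInf_of_antitone hG⟩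

theorem tendsto_condExpL2_iInf {G : ℕ → MeasurableSpace Ω} (hG : Antitone G)
    (hG_le : ∀ n, G n ≤ m0) (f : Lp ℝ 2 μ) :
    Tendsto (fun n => (condExpL2 ℝ ℝ (hG_le n) f : Lp ℝ 2 μ)) atTop
      (𝓝 (condExpL2 ℝ ℝ (iInf_le_of_le 0 (hG_le 0)) f : Lp ℝ 2 μ)) := by
  have : ∀ n, Fact (G n ≤ m0) := fun n => ⟨hG_le n⟩
  have : Fact (⨅ n, G n ≤ m0) := ⟨iInf_le_of_le 0 (hG_le 0)⟩
  have : (⨅ n, lpMeas ℝ ℝ (G n) 2 μ).HasOrthogonalProjection := by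
    rw [← lpMeas_iInf_of_antitone hG]; infer_instance
  have h := Submodule.starProjection_tendsto_iInf (fun n => lpMeas ℝ ℝ (G n) 2 μ)
    (fun i j hij g hg => mem_lpMeas_iff_aestronglyMeasurable.mpr
      ((mem_lpMeas_iff_aestronglyMeasurable.mp hg).mono (hG hij))) f
  simp only [← lpMeas_iInf_of_antitone hG] at h
  exact h

theorem integral_condExp_mul_eq_inner [IsFiniteMeasure μ] (hm : m ≤ m0) {f g : Ω → ℝ}
    (hf : MemLp f 2 μ) (hg : MemLp g 2 μ) :
    ∫ ω, μ[f|m] ω * g ω ∂μ = inner ℝ (condExpL2 ℝ ℝ hm hf.toLp : Lp ℝ 2 μ) (hg.toLp g) := by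
  rw [L2.inner_def]
  refine integral_congr_ae ?_
  filter_upwards [hf.condExpL2_ae_eq_condExp (𝕜 := ℝ) hm, hg.coeFn_toLp] with ω hf' hg'
  rw [hf', hg', real_inner_eq_re_inner, RCLike.inner_apply, conj_trivial, mul_comm]
  rfl

theorem tendsto_integral_condExp_mul_of_antitone [IsFiniteMeasure μ] {G : ℕ → MeasurableSpace Ω}
    (hG : Antitone G) (hG_le : ∀ n, G n ≤ m0) {f g : Ω → ℝ} (hf : MemLp f 2 μ)
    (hg : MemLp g 2 μ) :
    Tendsto (fun n => ∫ ω, μ[f|G n] ω * g ω ∂μ) atTop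
      (𝓝 (∫ ω, μ[f|⨅ n, G n] ω * g ω ∂μ)) := by
  simp only [integral_condExp_mul_eq_inner (hG_le _) hf hg,
    integral_condExp_mul_eq_inner (iInf_le_of_le 0 (hG_le 0)) hf hg]
  exact (tendsto_condExpL2_iInf hG hG_le _).inner tendsto_const_nhds

theorem integral_mul_condExp_of_stronglyMeasurable [IsFiniteMeasure μ] (hm : m ≤ m0)
    {h g : Ω → ℝ} (hh : StronglyMeasurable[m] h) (hh2 : MemLp h 2 μ) (hg : MemLp g 2 μ) :
    ∫ ω, h ω * μ[g|m] ω ∂μ = ∫ ω, h ω * g ω ∂μ := calc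
  ∫ ω, h ω * μ[g|m] ω ∂μ = ∫ ω, μ[h * g|m] ω ∂μ :=
    integral_congr_ae (condExp_mul_of_stronglyMeasurable_left hh (hh2.integrable_mul hg)
      (hg.integrable one_le_two)).symm
  _ = ∫ ω, h ω * g ω ∂μ := integral_condExp hm

/-- Increments of conditional expectations along `m₁ ≤ m₂` are orthogonal to `m₁`, so their
correlation telescopes. -/
theorem integral_condExp_sub_mul_condExp_sub [IsFiniteMeasure μ] {m₁ m₂ : MeasurableSpace Ω}
    (h₁₂ : m₁ ≤ m₂) (h₂ : m₂ ≤ m0) {f g : Ω → ℝ} (hf : MemLp f 2 μ) (hg : MemLp g 2 μ) :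
    ∫ ω, (μ[f|m₂] ω - μ[f|m₁] ω) * (μ[g|m₂] ω - μ[g|m₁] ω) ∂μ
      = ∫ ω, μ[f|m₂] ω * g ω ∂μ - ∫ ω, μ[f|m₁] ω * g ω ∂μ := by
  have h₁ : m₁ ≤ m0 := h₁₂.trans h₂
  have hint : ∀ {u v : Ω → ℝ}, MemLp u 2 μ → MemLp v 2 μ →
      Integrable (fun ω => u ω * v ω) μ := fun hu hv => hu.integrable_mul hv
  have hf₁ := hf.condExp (m := m₁) one_le_two
  have hf₂ := hf.condExp (m := m₂) one_le_two
  have hg₁ := hg.condExp (m := m₁) one_le_two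
  have hg₂ := hg.condExp (m := m₂) one_le_two
  have hdf : MemLp (fun ω => μ[f|m₂] ω - μ[f|m₁] ω) 2 μ := hf₂.sub hf₁
  have hdf_meas : StronglyMeasurable[m₂] (μ[f|m₂] - μ[f|m₁]) :=
    stronglyMeasurable_condExp.sub (stronglyMeasurable_condExp.mono h₁₂)
  have horth : ∫ ω, (μ[f|m₂] ω - μ[f|m₁] ω) * μ[g|m₁] ω ∂μ = 0 := by
    have hpull : ∀ m', m₁ ≤ m' → m' ≤ m0 →
        ∫ ω, μ[g|m₁] ω * μ[f|m'] ω ∂μ = ∫ ω, μ[g|m₁] ω * f ω ∂μ := fun m' h₁' h' =>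
      integral_mul_condExp_of_stronglyMeasurable h' (stronglyMeasurable_condExp.mono h₁') hg₁ hf
    simp_rw [sub_mul, mul_comm _ (μ[g|m₁] _)]
    rw [integral_sub (hint hg₁ hf₂) (hint hg₁ hf₁), hpull m₂ h₁₂ h₂,
      hpull m₁ le_rfl h₁, sub_self]
  calc ∫ ω, (μ[f|m₂] ω - μ[f|m₁] ω) * (μ[g|m₂] ω - μ[g|m₁] ω) ∂μ
      = ∫ ω, (μ[f|m₂] ω - μ[f|m₁] ω) * μ[g|m₂] ω ∂μ := by
        simp_rw [mul_sub]
        rw [integral_sub (hint hdf hg₂) (hint hdf hg₁), horth, sub_zero]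
    _ = ∫ ω, (μ[f|m₂] ω - μ[f|m₁] ω) * g ω ∂μ :=
        integral_mul_condExp_of_stronglyMeasurable h₂ hdf_meas hdf hg
    _ = ∫ ω, μ[f|m₂] ω * g ω ∂μ - ∫ ω, μ[f|m₁] ω * g ω ∂μ := by
        simp_rw [sub_mul]
        exact integral_sub (hint hf₂ hg) (hint hf₁ hg)

theorem MeasurePreserving.integral_comp_of_aestronglyMeasurable {α β E : Type*}
    [MeasurableSpace α] [MeasurableSpace β] [NormedAddCommGroup E] [NormedSpace ℝ E]
    {μ : Measure α} {ν : Measure β} {T : α → β} (hT : MeasurePreserving T μ ν) {g : β → E}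
    (hg : AEStronglyMeasurable g ν) : ∫ x, g (T x) ∂μ = ∫ y, g y ∂ν := by
  rw [← hT.map_eq] at hg ⊢
  exact (integral_map hT.aemeasurable hg).symm

theorem MeasurePreserving.setIntegral_preimage_comp {α β E : Type*}
    [MeasurableSpace α] [MeasurableSpace β] [NormedAddCommGroup E] [NormedSpace ℝ E]
    {μ : Measure α} {ν : Measure β} {T : α → β} (hT : MeasurePreserving T μ ν) {g : β → E}
    (hg : AEStronglyMeasurable g ν) {B : Set β} (hB : MeasurableSet B) :
    ∫ x in T ⁻¹' B, g (T x) ∂μ = ∫ y in B, g y ∂ν := by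
  rw [← hT.map_eq] at hg ⊢
  exact (setIntegral_map hB hg hT.aemeasurable).symm

theorem condExp_comp_ae_eq [IsFiniteMeasure μ] {T : Ω → Ω} (hT : MeasurePreserving T μ μ)
    (hm : m ≤ m0) {f : Ω → ℝ} (hf : Integrable f μ) :
    μ[f ∘ T|m.comap T] =ᵐ[μ] μ[f|m] ∘ T := by
  have hcomap : m.comap T ≤ m0 := by
    rintro s ⟨B, hB, rfl⟩
    exact hT.measurable (hm B hB)
  have hTm : Measurable[m.comap T, m] T := fun s hs => ⟨s, hs, rfl⟩
  refine (ae_eq_condExp_of_forall_setIntegral_eq hcomap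
    (hT.integrable_comp_of_integrable hf)
    (fun s _ _ => (hT.integrable_comp_of_integrable integrable_condExp).integrableOn) ?_
    (stronglyMeasurable_condExp.comp_measurable hTm).aestronglyMeasurable).symm
  rintro s ⟨B, hB, rfl⟩ -
  simp only [Function.comp_apply]
  rw [hT.setIntegral_preimage_comp integrable_condExp.aestronglyMeasurable (hm B hB),
    hT.setIntegral_preimage_comp hf.aestronglyMeasurable (hm B hB),
    setIntegral_condExp hm hf hB]

theorem integral_condExp_comp_mul_comp [IsFiniteMeasure μ] {T : Ω → Ω}
    (hT : MeasurePreserving T μ μ) (hm : m ≤ m0) {f g : Ω → ℝ} (hf : Integrable f μ)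
    (hg : AEStronglyMeasurable g μ) :
    ∫ ω, μ[f ∘ T|m.comap T] ω * g (T ω) ∂μ = ∫ ω, μ[f|m] ω * g ω ∂μ := calc
  ∫ ω, μ[f ∘ T|m.comap T] ω * g (T ω) ∂μ = ∫ ω, μ[f|m] (T ω) * g (T ω) ∂μ :=
    integral_congr_ae ((condExp_comp_ae_eq hT hm hf).mono fun ω hω => by
      simp only [hω, Function.comp_apply])
  _ = ∫ ω, μ[f|m] ω * g ω ∂μ :=
    hT.integral_comp_of_aestronglyMeasurable
      (g := fun ω => μ[f|m] ω * g ω) (integrable_condExp.aestronglyMeasurable.mul hg)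

end MeasureTheory

theorem memLp_of_shift {Ω : Type*} [MeasurableSpace Ω] {P : Measure Ω} {T : Ω → Ω}
    (hT : MeasurePreserving T P P) {X : ℤ → Ω → ℝ} (hX_shift : ∀ j : ℤ, X (j + 1) = X j ∘ T)
    {p : ℝ≥0∞} (hX0 : MemLp (X 0) p P) (n : ℕ) : MemLp (X n) p P := by
  induction n with
  | zero => exact hX0
  | succ n ih => rw [Nat.cast_succ, hX_shift]; exact ih.comp_measurePreserving hT

theorem integral_condExp_mul_shift {Ω : Type*} [MeasurableSpace Ω] {P : Measure Ω}
    [IsFiniteMeasure P] {T : Ω → Ω} (hT : MeasurePreserving T P P) {F : ℤ → MeasurableSpace Ω}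
    (hF_le : ∀ j, F j ≤ ‹MeasurableSpace Ω›) (hF_shift : ∀ j : ℤ, F (j + 1) = (F j).comap T)
    {X : ℤ → Ω → ℝ} (hX_shift : ∀ j : ℤ, X (j + 1) = X j ∘ T)
    (hX : ∀ n : ℕ, Integrable (X n) P) (k : ℤ) (l b : ℕ) :
    ∫ ω, P[X l|F k] ω * X ((l : ℤ) + b) ω ∂P = ∫ ω, P[X 0|F (k - l)] ω * X b ω ∂P := by
  induction l generalizing k with
  | zero => simp
  | succ l ih =>
    have hF : F k = (F (k - 1)).comap T := by rw [← hF_shift, sub_add_cancel]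
    have hXl : X (l + 1 : ℕ) = X l ∘ T := by push_cast; exact hX_shift l
    have hXb : X ((l + 1 : ℕ) + b) = X (l + b : ℕ) ∘ T := by
      rw [← hX_shift]; push_cast; ring_nf
    rw [hF, hXl, hXb]
    refine (integral_condExp_comp_mul_comp hT (hF_le _) (hX l)
      (hX (l + b)).aestronglyMeasurable).trans ?_
    rw [Nat.cast_add, ih]
    push_cast; ring_nf

theorem covariance_eq_limit_proj_sums_general
    {Ω : Type*} [MeasurableSpace Ω] (P : Measure Ω) [IsProbabilityMeasure P]
    (T : Ω → Ω) (hT : Ergodic T P)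
    (F : ℤ → MeasurableSpace Ω)
    (hF_le : ∀ j, F j ≤ ‹MeasurableSpace Ω›)
    (hF_mono : Monotone F)
    (hF_shift : ∀ j : ℤ, F (j + 1) = (F j).comap T)
    (X : ℤ → Ω → ℝ)
    (hX_shift : ∀ j : ℤ, X (j + 1) = X j ∘ T)
    (hX0_meas : Measurable[F 0] (X 0))
    (hX0_L2 : MemLp (X 0) 2 P)
    (hreg : P[X 0|⨅ j : ℤ, F j] =ᵐ[P] 0) :
    ∀ j : ℕ,
      Tendsto (fun n : ℕ => ∑ l ∈ Finset.range (n - j + 1),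
          ∫ ω, ((P[X (l : ℤ)|F 0]) ω - (P[X (l : ℤ)|F (-1)]) ω) *
            ((P[X ((l : ℤ) + (j : ℤ))|F 0]) ω - (P[X ((l : ℤ) + (j : ℤ))|F (-1)]) ω) ∂P)
        atTop (𝓝 (∫ ω, X 0 ω * X (j : ℤ) ω ∂P)) := by
  intro j
  have hT' : MeasurePreserving T P P := hT.toMeasurePreserving
  have hX : ∀ n : ℕ, MemLp (X n) 2 P := memLp_of_shift hT' hX_shift hX0_L2
  have hX_int : ∀ n : ℕ, Integrable (X n) P := fun n => (hX n).integrable one_le_two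
  let c : ℕ → ℝ := fun n => ∫ ω, P[X 0|F (-n)] ω * X j ω ∂P
  have hterm : ∀ l : ℕ, ∫ ω, (P[X l|F 0] ω - P[X l|F (-1)] ω) *
      (P[X (l + j)|F 0] ω - P[X (l + j)|F (-1)] ω) ∂P = c l - c (l + 1) := by
    intro l
    rw [integral_condExp_sub_mul_condExp_sub (hF_mono (by norm_num)) (hF_le 0) (hX l)
      (by exact_mod_cast hX (l + j)),
      integral_condExp_mul_shift hT' hF_le hF_shift hX_shift hX_int 0 l j,
      integral_condExp_mul_shift hT' hF_le hF_shift hX_shift hX_int (-1) l j]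
    have h₀ : (0 : ℤ) - l = -(l : ℕ) := zero_sub _
    have h₁ : (-1 : ℤ) - l = -((l + 1 : ℕ) : ℤ) := by push_cast; ring
    rw [h₀, h₁]
  have hc0 : c 0 = ∫ ω, X 0 ω * X j ω ∂P := by
    simp only [c, Nat.cast_zero, neg_zero,
      condExp_of_stronglyMeasurable (hF_le 0) hX0_meas.stronglyMeasurable (hX_int 0)]
  have hc_lim : Tendsto c atTop (𝓝 0) := by
    have h := tendsto_integral_condExp_mul_of_antitone (G := fun n : ℕ => F (-n))
      (fun a b hab => hF_mono (by omega)) (fun n => hF_le _) hX0_L2 (hX j)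
    rwa [iInf_neg_natCast_eq_iInf hF_mono, integral_eq_zero_of_ae
      (hreg.mono fun ω hω => by simp [hω])] at h
  simp_rw [hterm, Finset.sum_range_sub' c, ← hc0]
  simpa using (tendsto_const_nhds.sub
    ((hc_lim.comp (tendsto_add_atTop_nat 1)).comp (tendsto_sub_atTop_nat j)))

/-- **Covariance identity in the proof of Lemma 4.2.**  Under regularity, for every `j ≥ 0`,
`c_j = Cov(X_0, X_j) = lim_n ∑_{l=0}^{n−j} E[(P_0 X_l)(P_0 X_{l+j})]`, where
`P_0 Y = E(Y|F_0) − E(Y|F_{−1})`. -/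
theorem covariance_eq_limit_proj_sums
    {Ω : Type*} [MeasurableSpace Ω] (P : Measure Ω) [IsProbabilityMeasure P]
    (T Tinv : Ω → Ω) (hT : Ergodic T P)
    (hTinv : Measurable Tinv)
    (hTlinv : Function.LeftInverse Tinv T) (hTrinv : Function.RightInverse Tinv T)
    (F : ℤ → MeasurableSpace Ω)
    (hF_le : ∀ j, F j ≤ ‹MeasurableSpace Ω›)
    (hF_mono : Monotone F)
    (hF_shift : ∀ j : ℤ, F (j + 1) = (F j).comap T)
    (X : ℤ → Ω → ℝ)
    (hX_shift : ∀ j : ℤ, X (j + 1) = X j ∘ T)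
    (hX0_meas : Measurable[F 0] (X 0))
    (hX0_L2 : MemLp (X 0) 2 P)
    (hX0_mean : ∫ ω, X 0 ω ∂P = 0)
    (hreg : P[X 0|⨅ j : ℤ, F j] =ᵐ[P] 0) :
    ∀ j : ℕ,
      Tendsto (fun n : ℕ => ∑ l ∈ Finset.range (n - j + 1),
          ∫ ω, ((P[X (l : ℤ)|F 0]) ω - (P[X (l : ℤ)|F (-1)]) ω) *
            ((P[X ((l : ℤ) + (j : ℤ))|F 0]) ω - (P[X ((l : ℤ) + (j : ℤ))|F (-1)]) ω) ∂P)
        atTop (𝓝 (∫ ω, X 0 ω * X (j : ℤ) ω ∂P)) :=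
  covariance_eq_limit_proj_sums_general P T hT F hF_le hF_mono hF_shift X hX_shift hX0_meas hX0_L2
    hreg
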